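/- Corollary 3.0(i): Let p ∈ [1,∞). The integral operator K defined by (K f)(x) = Σ_m ‖ψ_m‖₁^{−1} ψ_m(x) ∫_{ℝ^d} ψ_m(y) f(y) dy maps L^p(ℝ^d) into itself and satisfies ‖K f‖_{L^p(ℝ^d)} ≤ ‖f‖_{L^p(ℝ^d)} for every f ∈ L^p(ℝ^d). -/

import Mathlib

open MeasureTheory

noncomputable section

/-- The canonical hat function on `ℝ`. -/
def hat (t : ℝ) : ℝ := max 0 (1 - |t|)

/-- The `i`-th coordinate of the grid-knot `x_m = v + h * r * m`. -/
def gridKnot (d : ℕ) (h : ℝ) (r : Fin d → ℕ) (v : Fin d → ℝ) (m : Fin d → ℤ) (i : Fin d) : ℝ :=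
  v i + h * (r i : ℝ) * (m i : ℝ)

/-- The `d`-dimensional hat function centered at the grid-knot `x_m`. -/
def psi (d : ℕ) (h : ℝ) (r : Fin d → ℕ) (v : Fin d → ℝ) (m : Fin d → ℤ) (x : Fin d → ℝ) : ℝ :=
  ∏ i, hat ((x i - gridKnot d h r v m i) / (h * (r i : ℝ)))

/-- The hat-function imbedding `u(n) = Σ_m u_m ψ_m`. -/
def imbed (d : ℕ) (h : ℝ) (r : Fin d → ℕ) (v : Fin d → ℝ) (u : (Fin d → ℤ) → ℝ)
    (x : Fin d → ℝ) : ℝ :=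
  ∑' m : Fin d → ℤ, u m * psi d h r v m x

/-- `vol(R) = r₁ ⋯ r_d`. -/
def volR (d : ℕ) (r : Fin d → ℕ) : ℝ := ∏ i, (r i : ℝ)

/-- Forward finite difference `(U_i u)_m = (u_{m+e_i} - u_m)/(r_i h)`. -/
def fdiff (d : ℕ) (h : ℝ) (r : Fin d → ℕ) (u : (Fin d → ℤ) → ℝ) (i : Fin d)
    (m : Fin d → ℤ) : ℝ :=
  (u (m + Pi.single i 1) - u m) / ((r i : ℝ) * h)

/-- The discrete norm `|u|²_{R2} = vol(R) Σ_m u_m²`. -/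
def norm2R (d : ℕ) (r : Fin d → ℕ) (u : (Fin d → ℤ) → ℝ) : ℝ :=
  volR d r * ∑' m : Fin d → ℤ, u m ^ 2

/-- The discrete Dirichlet form `q_R(u) = vol(R) Σ_i Σ_m (U_i u)_m²`. -/
def qR (d : ℕ) (h : ℝ) (r : Fin d → ℕ) (u : (Fin d → ℤ) → ℝ) : ℝ :=
  volR d r * ∑ i : Fin d, ∑' m : Fin d → ℤ, (fdiff d h r u i m) ^ 2


/-- The integral operator `K` with kernel `ω(x,y) = Σ_m ‖ψ_m‖₁⁻¹ ψ_m(x) ψ_m(y)`,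
where `‖ψ_m‖₁ = h^d vol(R)`. -/
def hatOp (d : ℕ) (h : ℝ) (r : Fin d → ℕ) (v : Fin d → ℝ) (f : (Fin d → ℝ) → ℝ)
    (x : Fin d → ℝ) : ℝ :=
  ∑' m : Fin d → ℤ, (h ^ d * volR d r)⁻¹ * psi d h r v m x *
    ∫ y : Fin d → ℝ, psi d h r v m y * f y

/-!
The kernel `ω(x, y) = Σ_m ‖ψ_m‖₁⁻¹ ψ_m(x) ψ_m(y)` is nonnegative, symmetric, and integrates to `1`
in each variable, because the hat functions `ψ_m` form a partition of unity and all have the same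
mass `‖ψ_m‖₁ = h^d vol(R)`. Such a doubly stochastic kernel contracts every `L^p` norm, `p ≥ 1`:
by Jensen's inequality for the sub-probability measure `ω(x, y) dy`,
`|K f (x)|^p ≤ ∫ ω(x, y) |f(y)|^p dy`, and integrating in `x` (Tonelli) gives `‖K f‖_p^p ≤ ‖f‖_p^p`.
-/

open scoped ENNReal

section DoublyStochastic

variable {α β : Type*} [MeasurableSpace α] [MeasurableSpace β] {μ : Measure α} {ν : Measure β}

theorem rpow_lintegral_mul_le_lintegral_mul_rpow {w F : β → ℝ≥0∞} (hw : AEMeasurable w ν)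
    (hF : AEMeasurable F ν) (hw_le : ∫⁻ y, w y ∂ν ≤ 1) {p : ℝ} (hp : 1 ≤ p) :
    (∫⁻ y, w y * F y ∂ν) ^ p ≤ ∫⁻ y, w y * F y ^ p ∂ν := by
  have hp₀ : 0 < p := zero_lt_one.trans_le hp
  have hp_inv : 0 ≤ 1 - p⁻¹ := sub_nonneg.2 (inv_le_one_of_one_le₀ hp)
  have hsplit : ∀ y, (w y * F y ^ p) ^ p⁻¹ * w y ^ (1 - p⁻¹) = w y * F y := fun y => by
    rw [ENNReal.mul_rpow_of_nonneg _ _ (inv_nonneg.2 hp₀.le), ← ENNReal.rpow_mul,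
      mul_inv_cancel₀ hp₀.ne', ENNReal.rpow_one, mul_right_comm,
      ← ENNReal.rpow_add_of_nonneg _ _ (inv_nonneg.2 hp₀.le) hp_inv, add_sub_cancel,
      ENNReal.rpow_one]
  rw [← ENNReal.le_rpow_inv_iff hp₀]
  calc ∫⁻ y, w y * F y ∂ν
      = ∫⁻ y, (w y * F y ^ p) ^ p⁻¹ * w y ^ (1 - p⁻¹) ∂ν := by simp_rw [hsplit]
    _ ≤ (∫⁻ y, w y * F y ^ p ∂ν) ^ p⁻¹ * (∫⁻ y, w y ∂ν) ^ (1 - p⁻¹) :=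
      ENNReal.lintegral_mul_norm_pow_le (hw.mul (hF.pow_const p)) hw (inv_nonneg.2 hp₀.le) hp_inv
        (by ring)
    _ ≤ (∫⁻ y, w y * F y ^ p ∂ν) ^ p⁻¹ :=
      mul_le_of_le_one_right' (ENNReal.rpow_le_one hw_le hp_inv)

variable [SFinite μ] [SFinite ν]

theorem lintegral_rpow_lintegral_mul_le {W : α → β → ℝ≥0∞} (hW : Measurable (Function.uncurry W))
    (hW_right : ∀ x, ∫⁻ y, W x y ∂ν ≤ 1) (hW_left : ∀ y, ∫⁻ x, W x y ∂μ ≤ 1)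
    {F : β → ℝ≥0∞} (hF : AEMeasurable F ν) {p : ℝ} (hp : 1 ≤ p) :
    ∫⁻ x, (∫⁻ y, W x y * F y ∂ν) ^ p ∂μ ≤ ∫⁻ y, F y ^ p ∂ν :=
  calc ∫⁻ x, (∫⁻ y, W x y * F y ∂ν) ^ p ∂μ
      ≤ ∫⁻ x, ∫⁻ y, W x y * F y ^ p ∂ν ∂μ := lintegral_mono fun x =>
        rpow_lintegral_mul_le_lintegral_mul_rpow hW.of_uncurry_left.aemeasurable hF
          (hW_right x) hp
    _ = ∫⁻ y, ∫⁻ x, W x y * F y ^ p ∂μ ∂ν :=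
        lintegral_lintegral_swap (hW.aemeasurable.mul (hF.pow_const p).comp_snd)
    _ = ∫⁻ y, (∫⁻ x, W x y ∂μ) * F y ^ p ∂ν :=
        lintegral_congr fun _ => lintegral_mul_const _ hW.of_uncurry_right
    _ ≤ ∫⁻ y, F y ^ p ∂ν := lintegral_mono fun y => mul_le_of_le_one_left' (hW_left y)

theorem eLpNorm_le_of_enorm_le_lintegral_mul {E F : Type*} [ENorm E] [TopologicalSpace F]
    [ContinuousENorm F] {g : α → E} {f : β → F} {W : α → β → ℝ≥0∞}
    (hW : Measurable (Function.uncurry W)) (hW_right : ∀ x, ∫⁻ y, W x y ∂ν ≤ 1)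
    (hW_left : ∀ y, ∫⁻ x, W x y ∂μ ≤ 1) (hf : AEStronglyMeasurable f ν)
    (hgf : ∀ x, ‖g x‖ₑ ≤ ∫⁻ y, W x y * ‖f y‖ₑ ∂ν) {p : ℝ≥0∞} (hp : 1 ≤ p) (hp_top : p ≠ ∞) :
    eLpNorm g p μ ≤ eLpNorm f p ν := by
  have hp₀ : p ≠ 0 := (zero_lt_one.trans_le hp).ne'
  have hp_real : 1 ≤ p.toReal := by
    simpa using (ENNReal.toReal_le_toReal ENNReal.one_ne_top hp_top).2 hp
  rw [eLpNorm_eq_lintegral_rpow_enorm_toReal hp₀ hp_top,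
    eLpNorm_eq_lintegral_rpow_enorm_toReal hp₀ hp_top]
  refine ENNReal.rpow_le_rpow ?_ (by positivity)
  calc ∫⁻ x, ‖g x‖ₑ ^ p.toReal ∂μ
      ≤ ∫⁻ x, (∫⁻ y, W x y * ‖f y‖ₑ ∂ν) ^ p.toReal ∂μ :=
        lintegral_mono fun x => ENNReal.rpow_le_rpow (hgf x) (by positivity)
    _ ≤ ∫⁻ y, ‖f y‖ₑ ^ p.toReal ∂ν :=
        lintegral_rpow_lintegral_mul_le hW hW_right hW_left hf.enorm hp_real

end DoublyStochastic

section PartitionOfUnity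

variable {ι α : Type*}

def partitionKernel (φ : ι → α → ℝ) (c : ℝ) (x y : α) : ℝ≥0∞ :=
  ∑' i, ENNReal.ofReal (c⁻¹ * φ i x * φ i y)

theorem partitionKernel_comm (φ : ι → α → ℝ) (c : ℝ) (x y : α) :
    partitionKernel φ c x y = partitionKernel φ c y x := by
  simp only [partitionKernel, mul_right_comm _ (φ _ x)]

variable [MeasurableSpace α]

/-- `hatOp d h r v` is `partitionOp volume (psi d h r v) (h ^ d * volR d r)`. -/
def partitionOp (μ : Measure α) (φ : ι → α → ℝ) (c : ℝ) (f : α → ℝ) (x : α) : ℝ :=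
  ∑' i, c⁻¹ * φ i x * ∫ y, φ i y * f y ∂μ

variable [Countable ι] {μ : Measure α} {φ : ι → α → ℝ} {c : ℝ}

theorem measurable_partitionKernel (hφ : ∀ i, Measurable (φ i)) :
    Measurable (Function.uncurry (partitionKernel φ c)) :=
  Measurable.tsum fun i =>
    ((((hφ i).comp measurable_fst).const_mul _).mul ((hφ i).comp measurable_snd)).ennreal_ofReal

theorem lintegral_partitionKernel (hφ : ∀ i, Measurable (φ i)) (hφ₀ : ∀ i x, 0 ≤ φ i x)
    (hsum : ∀ x, HasSum (φ · x) 1) (hc : 0 < c)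
    (hmass : ∀ i, ∫⁻ y, ENNReal.ofReal (φ i y) ∂μ = ENNReal.ofReal c) (x : α) :
    ∫⁻ y, partitionKernel φ c x y ∂μ = 1 := by
  have hcoef : ∀ i, 0 ≤ c⁻¹ * φ i x := fun i => mul_nonneg (inv_nonneg.2 hc.le) (hφ₀ i x)
  have hterm : ∀ i, ∫⁻ y, ENNReal.ofReal (c⁻¹ * φ i x * φ i y) ∂μ = ENNReal.ofReal (φ i x) := by
    intro i
    simp_rw [ENNReal.ofReal_mul (hcoef i)]
    rw [lintegral_const_mul _ (hφ i).ennreal_ofReal, hmass, ← ENNReal.ofReal_mul (hcoef i),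
      mul_right_comm, inv_mul_cancel₀ hc.ne', one_mul]
  simp only [partitionKernel]
  rw [lintegral_tsum fun i => ((hφ i).const_mul _).ennreal_ofReal.aemeasurable]
  simp_rw [hterm]
  rw [← ENNReal.ofReal_tsum_of_nonneg (hφ₀ · x) (hsum x).summable, (hsum x).tsum_eq,
    ENNReal.ofReal_one]

theorem enorm_partitionOp_le (hφ : ∀ i, Measurable (φ i)) (hφ₀ : ∀ i x, 0 ≤ φ i x) (hc : 0 ≤ c)
    {f : α → ℝ} (hf : AEStronglyMeasurable f μ) (x : α) :
    ‖partitionOp μ φ c f x‖ₑ ≤ ∫⁻ y, partitionKernel φ c x y * ‖f y‖ₑ ∂μ := by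
  have hcoef : ∀ i, 0 ≤ c⁻¹ * φ i x := fun i => mul_nonneg (inv_nonneg.2 hc) (hφ₀ i x)
  calc ‖partitionOp μ φ c f x‖ₑ
      ≤ ∑' i, ‖c⁻¹ * φ i x * ∫ y, φ i y * f y ∂μ‖ₑ := enorm_tsum_le_tsum_enorm
    _ ≤ ∑' i, ENNReal.ofReal (c⁻¹ * φ i x) * ∫⁻ y, ‖φ i y * f y‖ₑ ∂μ := by
        gcongr with i
        rw [enorm_mul, Real.enorm_of_nonneg (hcoef i)]
        gcongr
        exact enorm_integral_le_lintegral_enorm _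
    _ = ∑' i, ∫⁻ y, ENNReal.ofReal (c⁻¹ * φ i x * φ i y) * ‖f y‖ₑ ∂μ := by
        refine tsum_congr fun i => ?_
        have hnorm : ∀ y, ‖φ i y * f y‖ₑ = ENNReal.ofReal (φ i y) * ‖f y‖ₑ := fun y => by
          rw [enorm_mul, Real.enorm_of_nonneg (hφ₀ i y)]
        simp_rw [hnorm, ENNReal.ofReal_mul (hcoef i), mul_assoc]
        exact (lintegral_const_mul'' _ ((hφ i).ennreal_ofReal.aemeasurable.mul hf.enorm)).symm
    _ = ∫⁻ y, partitionKernel φ c x y * ‖f y‖ₑ ∂μ := by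
        simp_rw [partitionKernel, ← ENNReal.tsum_mul_right]
        exact (lintegral_tsum fun i =>
          ((hφ i).const_mul _).ennreal_ofReal.aemeasurable.mul hf.enorm).symm

theorem measurable_partitionOp (hφ : ∀ i, Measurable (φ i)) (f : α → ℝ) :
    Measurable (partitionOp μ φ c f) :=
  Measurable.tsum fun i => ((hφ i).const_mul _).mul_const _

theorem partitionOp_memLp_eLpNorm_le [SFinite μ] (hφ : ∀ i, Measurable (φ i))
    (hφ₀ : ∀ i x, 0 ≤ φ i x) (hsum : ∀ x, HasSum (φ · x) 1) (hc : 0 < c)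
    (hmass : ∀ i, ∫⁻ y, ENNReal.ofReal (φ i y) ∂μ = ENNReal.ofReal c)
    {p : ℝ≥0∞} (hp : 1 ≤ p) (hp_top : p ≠ ∞) {f : α → ℝ} (hf : MemLp f p μ) :
    MemLp (partitionOp μ φ c f) p μ ∧ eLpNorm (partitionOp μ φ c f) p μ ≤ eLpNorm f p μ := by
  have hK := lintegral_partitionKernel hφ hφ₀ hsum hc hmass
  have hle : eLpNorm (partitionOp μ φ c f) p μ ≤ eLpNorm f p μ :=
    eLpNorm_le_of_enorm_le_lintegral_mul (measurable_partitionKernel hφ) (fun x => (hK x).le)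
      (fun y => by simp_rw [partitionKernel_comm φ c _ y]; exact (hK y).le) hf.1
      (enorm_partitionOp_le hφ hφ₀ hc.le hf.1) hp hp_top
  exact ⟨⟨(measurable_partitionOp hφ f).aestronglyMeasurable, hle.trans_lt hf.2⟩, hle⟩

end PartitionOfUnity

section Hat

theorem hat_nonneg (t : ℝ) : 0 ≤ hat t := le_max_left _ _

theorem hat_eq_zero {t : ℝ} (ht : 1 ≤ |t|) : hat t = 0 := max_eq_left (by linarith)

theorem hat_of_abs_le {t : ℝ} (ht : |t| ≤ 1) : hat t = 1 - |t| := max_eq_right (by linarith)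

theorem continuous_hat : Continuous hat :=
  continuous_const.max (continuous_const.sub continuous_abs)

theorem hat_sub_intCast_eq_zero {t : ℝ} {n : ℤ} (hn : n ∉ ({⌊t⌋, ⌊t⌋ + 1} : Finset ℤ)) :
    hat (t - n) = 0 := by
  simp only [Finset.mem_insert, Finset.mem_singleton, not_or] at hn
  refine hat_eq_zero (le_abs'.2 ?_)
  rcases lt_or_gt_of_ne hn.1 with hlt | hgt
  · have : (n : ℝ) + 1 ≤ ⌊t⌋ := by exact_mod_cast hlt
    exact Or.inr (by linarith [Int.floor_le t])
  · have : (⌊t⌋ : ℝ) + 2 ≤ n := by exact_mod_cast (by omega : ⌊t⌋ + 2 ≤ n)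
    exact Or.inl (by linarith [Int.lt_floor_add_one t])

theorem sum_hat_sub_floor (t : ℝ) : ∑ n ∈ ({⌊t⌋, ⌊t⌋ + 1} : Finset ℤ), hat (t - n) = 1 := by
  have h₀ := Int.fract_nonneg t
  have h₁ := Int.fract_lt_one t
  have hfract : t - ⌊t⌋ = Int.fract t := rfl
  rw [Finset.sum_pair (by omega), Int.cast_add, Int.cast_one, ← sub_sub, hfract,
    hat_of_abs_le (by rw [abs_of_nonneg h₀]; linarith),
    hat_of_abs_le (by rw [abs_of_neg (by linarith)]; linarith),
    abs_of_nonneg h₀, abs_of_neg (by linarith)]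
  ring

theorem integrable_hat : Integrable hat :=
  continuous_hat.integrable_of_hasCompactSupport <| HasCompactSupport.intro isCompact_Icc
    fun t ht => hat_eq_zero (by rw [Set.mem_Icc, ← abs_le, not_le] at ht; exact ht.le)

theorem integral_hat : ∫ t, hat t = 1 := by
  have hc : Continuous fun t : ℝ => 1 - |t| := by fun_prop
  have hout : ∀ t ∉ Set.Ioc (-1 : ℝ) 1, hat t = 0 := fun t ht => by
    simp only [Set.mem_Ioc, not_and_or, not_lt, not_le] at ht
    exact hat_eq_zero (le_abs'.2 (ht.imp id le_of_lt))
  rw [← setIntegral_eq_integral_of_forall_compl_eq_zero hout,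
    ← intervalIntegral.integral_of_le (by norm_num),
    intervalIntegral.integral_congr (g := fun t => 1 - |t|) fun t ht => by
      rw [Set.uIcc_of_le (by norm_num)] at ht
      exact hat_of_abs_le (abs_le.2 ht),
    ← intervalIntegral.integral_add_adjacent_intervals (b := 0) (hc.intervalIntegrable _ _)
      (hc.intervalIntegrable _ _),
    intervalIntegral.integral_congr (a := -1) (b := 0) (g := fun t => 1 + t) fun t ht => by
      rw [Set.uIcc_of_le (by norm_num)] at ht
      simp [abs_of_nonpos ht.2],
    intervalIntegral.integral_congr (a := 0) (b := 1) (g := fun t => 1 - t) fun t ht => by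
      rw [Set.uIcc_of_le (by norm_num)] at ht
      simp [abs_of_nonneg ht.1],
    intervalIntegral.integral_add intervalIntegrable_const (continuous_id'.intervalIntegrable _ _),
    intervalIntegral.integral_sub intervalIntegrable_const (continuous_id'.intervalIntegrable _ _)]
  norm_num [integral_id]

theorem integrable_hat_sub_div (a : ℝ) {s : ℝ} (hs : s ≠ 0) :
    Integrable fun t => hat ((t - a) / s) :=
  (integrable_hat.comp_div hs).comp_sub_right a

theorem integral_hat_sub_div (a : ℝ) {s : ℝ} (hs : 0 < s) : ∫ t, hat ((t - a) / s) = s := by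
  rw [integral_sub_right_eq_self (fun t => hat (t / s)), Measure.integral_comp_div hat s,
    integral_hat, abs_of_pos hs, smul_eq_mul, mul_one]

end Hat

theorem hasSum_fintype_prod_of_ne_finset_zero {ι κ R : Type*} [Fintype ι] [DecidableEq ι]
    [CommSemiring R] [TopologicalSpace R] {f : ι → κ → R} {s : ι → Finset κ}
    (hf : ∀ i, ∀ k ∉ s i, f i k = 0) :
    HasSum (fun m : ι → κ => ∏ i, f i (m i)) (∏ i, ∑ k ∈ s i, f i k) := by
  rw [Finset.prod_univ_sum]
  refine hasSum_sum_of_ne_finset_zero fun m hm => ?_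
  obtain ⟨i, hi⟩ : ∃ i, m i ∉ s i := by simpa [Fintype.mem_piFinset] using hm
  exact Finset.prod_eq_zero (Finset.mem_univ i) (hf i _ hi)

section Psi

variable {d : ℕ} {h : ℝ} {r : Fin d → ℕ} {v : Fin d → ℝ}

theorem volR_pos (hr : ∀ i, 0 < r i) : 0 < volR d r :=
  Finset.prod_pos fun i _ => Nat.cast_pos.2 (hr i)

theorem psi_nonneg (m : Fin d → ℤ) (x : Fin d → ℝ) : 0 ≤ psi d h r v m x :=
  Finset.prod_nonneg fun _ _ => hat_nonneg _

theorem continuous_psi (m : Fin d → ℤ) : Continuous (psi d h r v m) :=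
  continuous_finsetProd _ fun i _ => continuous_hat.comp (by fun_prop)

theorem sub_gridKnot_div {i : Fin d} (hhr : h * r i ≠ 0) (m : Fin d → ℤ) (y : ℝ) :
    (y - gridKnot d h r v m i) / (h * r i) = (y - v i) / (h * r i) - m i := by
  rw [gridKnot, ← sub_sub, sub_div, mul_div_cancel_left₀ _ hhr]

theorem hasSum_psi (hh : 0 < h) (hr : ∀ i, 0 < r i) (x : Fin d → ℝ) :
    HasSum (psi d h r v · x) 1 := by
  have hhr : ∀ i, h * r i ≠ 0 := fun i => (mul_pos hh (Nat.cast_pos.2 (hr i))).ne'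
  set t : Fin d → ℝ := fun i => (x i - v i) / (h * r i)
  have hprod := hasSum_fintype_prod_of_ne_finset_zero (f := fun i (n : ℤ) => hat (t i - n))
    fun i _ hn => hat_sub_intCast_eq_zero hn
  simp only [sum_hat_sub_floor, Finset.prod_const_one] at hprod
  have hpsi : (psi d h r v · x) = fun m => ∏ i, hat (t i - m i) :=
    funext fun m => Finset.prod_congr rfl fun i _ => by rw [sub_gridKnot_div (hhr i)]
  rwa [hpsi]

theorem lintegral_ofReal_psi (hh : 0 < h) (hr : ∀ i, 0 < r i) (m : Fin d → ℤ) :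
    ∫⁻ y, ENNReal.ofReal (psi d h r v m y) = ENNReal.ofReal (h ^ d * volR d r) := by
  have hhr : ∀ i, 0 < h * r i := fun i => mul_pos hh (Nat.cast_pos.2 (hr i))
  have hint : Integrable (psi d h r v m) :=
    Integrable.fintype_prod fun i => integrable_hat_sub_div _ (hhr i).ne'
  rw [← ofReal_integral_eq_lintegral_ofReal hint (ae_of_all _ (psi_nonneg m))]
  congr 1
  calc ∫ y, psi d h r v m y
      = ∏ i, ∫ t, hat ((t - gridKnot d h r v m i) / (h * r i)) :=
        integral_fintype_prod_volume_eq_prod fun i t => hat ((t - gridKnot d h r v m i) / (h * r i))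
    _ = h ^ d * volR d r := by
        simp_rw [integral_hat_sub_div _ (hhr _)]
        rw [Finset.prod_mul_distrib, Finset.prod_const, Finset.card_univ, Fintype.card_fin, volR]

end Psi

theorem hatOp_Lp_contraction_general (d : ℕ) (h : ℝ) (hh : 0 < h)
    (r : Fin d → ℕ) (hr : ∀ i, 0 < r i) (v : Fin d → ℝ) (p : ℝ) (hp : 1 ≤ p)
    (f : (Fin d → ℝ) → ℝ) (hf : MemLp f (ENNReal.ofReal p) (volume : Measure (Fin d → ℝ))) :
    MemLp (hatOp d h r v f) (ENNReal.ofReal p) (volume : Measure (Fin d → ℝ)) ∧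
      eLpNorm (hatOp d h r v f) (ENNReal.ofReal p) (volume : Measure (Fin d → ℝ)) ≤
        eLpNorm f (ENNReal.ofReal p) (volume : Measure (Fin d → ℝ)) :=
  partitionOp_memLp_eLpNorm_le (fun m => (continuous_psi m).measurable) psi_nonneg
    (hasSum_psi hh hr) (mul_pos (pow_pos hh d) (volR_pos hr)) (lintegral_ofReal_psi hh hr)
    (ENNReal.one_le_ofReal.2 hp) ENNReal.ofReal_ne_top hf

/-- Corollary 3.0(i): `K` maps `L^p(ℝ^d)` into itself and `‖K f‖_p ≤ ‖f‖_p`. -/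
theorem hatOp_Lp_contraction (d : ℕ) (hd : 1 ≤ d) (h : ℝ) (hh : 0 < h)
    (r : Fin d → ℕ) (hr : ∀ i, 0 < r i) (v : Fin d → ℝ) (p : ℝ) (hp : 1 ≤ p)
    (f : (Fin d → ℝ) → ℝ) (hf : MemLp f (ENNReal.ofReal p) (volume : Measure (Fin d → ℝ))) :
    MemLp (hatOp d h r v f) (ENNReal.ofReal p) (volume : Measure (Fin d → ℝ)) ∧
      eLpNorm (hatOp d h r v f) (ENNReal.ofReal p) (volume : Measure (Fin d → ℝ)) ≤
        eLpNorm f (ENNReal.ofReal p) (volume : Measure (Fin d → ℝ)) :=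
  hatOp_Lp_contraction_general d h hh r hr v p hp f hf
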